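/- There exist 50 points p₁, …, p₅₀ in the unit square [0,1]² ⊆ ℝ² with ‖pᵢ − pⱼ‖ ≥ 0.166 for all i ≠ j, such that the configuration {p₁, …, p₅₀} is invariant as a set under the reflection (x, y) ↦ (1 − x, y) of the unit square. -/
import Mathlib


/-- Reflection of the unit square across the vertical line `x = 1/2`:
`(x, y) ↦ (1 - x, y)`. -/
noncomputable def squareReflection (x : EuclideanSpace ℝ (Fin 2)) :
    EuclideanSpace ℝ (Fin 2) :=
  (WithLp.equiv 2 (Fin 2 → ℝ)).symm ![1 - x 0, x 1]

/-- The 50 packing points, scaled by 100000, as integer coordinates. -/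
def pkPts : Fin 50 → ℤ × ℤ := ![(50000, 13640), (50000, 100000), (50000, 42447), (50000, 71253), (76150, 0), (23850, 0), (58368, 85626), (41632, 85626), (84468, 14402), (15532, 14402), (33264, 100000), (66736, 100000), (1342, 53563), (98658, 53563), (100000, 70191), (0, 70191), (58317, 56849), (41683, 56849), (24942, 85593), (75058, 85593), (100000, 20349), (0, 20349), (0, 100000), (100000, 100000), (76154, 28807), (23846, 28807), (33364, 42447), (66636, 42447), (59517, 0), (40483, 0), (66686, 71223), (33314, 71223), (94666, 95), (5334, 95), (32165, 14405), (67835, 14405), (7410, 85109), (92590, 85109), (75025, 56832), (24975, 56832), (41682, 28043), (58318, 28043), (83398, 71203), (16602, 71203), (15475, 43179), (84525, 43179), (83368, 100000), (16632, 100000), (99960, 36981), (40, 36981)]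

/-- Mirror pairing permutation: swaps `2k ↔ 2k+1`. -/
def pkSigma : Fin 50 → Fin 50 := fun i =>
  if i.val < 4 then i else if i.val % 2 = 0 then i + 1 else i - 1

noncomputable def pkPt (a b : ℝ) : EuclideanSpace ℝ (Fin 2) :=
  (WithLp.equiv 2 (Fin 2 → ℝ)).symm ![a, b]

noncomputable def pkP (i : Fin 50) : EuclideanSpace ℝ (Fin 2) :=
  pkPt (((pkPts i).1 : ℝ) / 100000) (((pkPts i).2 : ℝ) / 100000)

lemma pk_range : ∀ i : Fin 50, 0 ≤ (pkPts i).1 ∧ (pkPts i).1 ≤ 100000 ∧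
    0 ≤ (pkPts i).2 ∧ (pkPts i).2 ≤ 100000 := by decide

lemma pk_dist : ∀ i j : Fin 50, i ≠ j →
    (16600:ℤ)*16600 ≤ ((pkPts i).1-(pkPts j).1)*((pkPts i).1-(pkPts j).1)
      + ((pkPts i).2-(pkPts j).2)*((pkPts i).2-(pkPts j).2) := by decide

lemma pk_sym : ∀ i : Fin 50,
    pkPts (pkSigma i) = (100000 - (pkPts i).1, (pkPts i).2) := by decide

lemma pk_sigma_invol : ∀ i : Fin 50, pkSigma (pkSigma i) = i := by decide

lemma pkPt_norm (a b c d : ℝ) :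
    ‖pkPt a b - pkPt c d‖ = Real.sqrt ((a-c)^2 + (b-d)^2) := by
  rw [EuclideanSpace.norm_eq]
  simp [pkPt, Fin.sum_univ_two, sq_abs]

lemma refl_pkPt (a b : ℝ) : squareReflection (pkPt a b) = pkPt (1-a) b := rfl

/-- There exist 50 points in the unit square `[0,1]²` with all pairwise
Euclidean distances at least 0.166, whose configuration is invariant as a set
under the reflection `(x, y) ↦ (1 - x, y)` (the improved packing of 50 disks
is mirror-symmetric). -/
theorem packing_50_disks_mirror_symmetric :
    ∃ p : Fin 50 → EuclideanSpace ℝ (Fin 2),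
      (∀ i, ∀ t : Fin 2, p i t ∈ Set.Icc (0 : ℝ) 1) ∧
      (∀ i j, i ≠ j → (0.166 : ℝ) ≤ ‖p i - p j‖) ∧
      squareReflection '' Set.range p = Set.range p := by
  refine ⟨pkP, ?_, ?_, ?_⟩
  · intro i t
    obtain ⟨h1, h2, h3, h4⟩ := pk_range i
    have k : ∀ (a : ℤ), 0 ≤ a → a ≤ 100000 → ((a:ℝ)/100000) ∈ Set.Icc (0:ℝ) 1 := by
      intro a ha hb
      have ha' : (0:ℝ) ≤ (a:ℝ) := by exact_mod_cast ha
      have hb' : (a:ℝ) ≤ 100000 := by exact_mod_cast hb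
      constructor
      · positivity
      · rw [div_le_one (by norm_num)]; linarith
    fin_cases t
    · exact k _ h1 h2
    · exact k _ h3 h4
  · intro i j hij
    have h1 := pk_dist i j hij
    set A := (pkPts i).1; set B := (pkPts i).2
    set C := (pkPts j).1; set D := (pkPts j).2
    show (0.166:ℝ) ≤ ‖pkPt ((A:ℝ)/100000) ((B:ℝ)/100000) - pkPt ((C:ℝ)/100000) ((D:ℝ)/100000)‖
    rw [pkPt_norm, show (0.166:ℝ) = Real.sqrt (0.166^2) by
      rw [Real.sqrt_sq (by norm_num)]]
    apply Real.sqrt_le_sqrt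
    have h2 : (16600:ℝ)*16600 ≤ ((A:ℝ)-C)*((A:ℝ)-C) + ((B:ℝ)-D)*((B:ℝ)-D) := by
      exact_mod_cast h1
    nlinarith [h2]
  · have h : ∀ i, squareReflection (pkP i) = pkP (pkSigma i) := by
      intro i
      rw [show pkP i = pkPt (((pkPts i).1:ℝ)/100000) (((pkPts i).2:ℝ)/100000) from rfl,
        refl_pkPt]
      unfold pkP
      rw [pk_sym i]
      have : (1 : ℝ) - ((pkPts i).1:ℝ)/100000 = (((100000 - (pkPts i).1 : ℤ)):ℝ)/100000 := by
        push_cast; ring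
      rw [this]
    have hσ : Function.Surjective pkSigma := Function.RightInverse.surjective pk_sigma_invol
    have hc : squareReflection ∘ pkP = pkP ∘ pkSigma := funext h
    rw [← Set.range_comp, hc, Set.range_comp, Set.range_eq_univ.2 hσ, Set.image_univ]
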